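/- arXiv:0710.5512 — 2 statements merged into one kernel-verified Lean document; each statement's English description precedes it below -/
import Mathlib

section
/- If v: [a,1] → ℝ is a proper U-convex function with respect to the mean-variance utility U(θ,Y) = E[Y] − θ·Var[Y] on a non-atomic probability space, then v(θ) = sup_{y ≤ 0} {θ·y − v*(y)}; in particular v is convex and non-increasing. -/
open MeasureTheory ProbabilityTheory Set

/-!
Each `Y` contributes the affine function `θ ↦ E[Y] - π(Y) - θ·Var[Y]`, whose slope `-Var[Y]` is
nonpositive, and `v` is their pointwise supremum. A supremum of affine functions is convex, and one
of nonincreasing affine functions is nonincreasing. For the dual formula, the affine minorant of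
slope `-Var[Y]` bounds the conjugate: `v*(-Var[Y]) ≤ π(Y) - E[Y]`, so already the slopes `y ≤ 0`
recover every minorant, hence `v`, in the biconjugate.
-/

noncomputable def conjugateOn (S : Set ℝ) (v : ℝ → ℝ) (y : ℝ) : ℝ :=
  ⨆ θ : S, (θ.1 * y - v θ.1)

theorem bddAbove_conjugateOn_of_nonpos {S : Set ℝ} {v : ℝ → ℝ} (hS : BddBelow S)
    (hv : BddBelow (v '' S)) {y : ℝ} (hy : y ≤ 0) :
    BddAbove (range fun θ : S => θ.1 * y - v θ.1) := by
  obtain ⟨a, ha⟩ := hS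
  obtain ⟨m, hm⟩ := hv
  refine ⟨a * y - m, ?_⟩
  rintro _ ⟨θ, rfl⟩
  have hθy : θ.1 * y ≤ a * y := mul_le_mul_of_nonpos_right (ha θ.2) hy
  linarith [hm (mem_image_of_mem v θ.2)]

section SupOfAffine

variable {ι : Type*} {c s : ι → ℝ} {S : Set ℝ} {v : ℝ → ℝ}

theorem sub_mul_le_of_eq_ciSup (hb : ∀ θ ∈ S, BddAbove (range fun i => c i - θ * s i))
    (hv : ∀ θ ∈ S, v θ = ⨆ i, (c i - θ * s i)) {θ : ℝ} (hθ : θ ∈ S) (i : ι) :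
    c i - θ * s i ≤ v θ :=
  (hv θ hθ).symm ▸ le_ciSup (hb θ hθ) i

theorem convexOn_of_eq_ciSup [Nonempty ι] (hS : Convex ℝ S)
    (hb : ∀ θ ∈ S, BddAbove (range fun i => c i - θ * s i))
    (hv : ∀ θ ∈ S, v θ = ⨆ i, (c i - θ * s i)) : ConvexOn ℝ S v := by
  refine ⟨hS, fun x hx z hz p q hp hq hpq => ?_⟩
  have hmem := hS hx hz hp hq hpq
  simp only [smul_eq_mul] at hmem ⊢
  rw [hv _ hmem]
  refine ciSup_le fun i => ?_
  calc c i - (p * x + q * z) * s i = p * (c i - x * s i) + q * (c i - z * s i) := by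
        linear_combination (-c i) * hpq
    _ ≤ p * v x + q * v z := by
        gcongr
        · exact sub_mul_le_of_eq_ciSup hb hv hx i
        · exact sub_mul_le_of_eq_ciSup hb hv hz i

theorem antitoneOn_of_eq_ciSup [Nonempty ι] (hs : ∀ i, 0 ≤ s i)
    (hb : ∀ θ ∈ S, BddAbove (range fun i => c i - θ * s i))
    (hv : ∀ θ ∈ S, v θ = ⨆ i, (c i - θ * s i)) : AntitoneOn v S := by
  intro x hx z hz hxz
  rw [hv z hz]
  refine ciSup_le fun i => ?_
  calc c i - z * s i ≤ c i - x * s i := by nlinarith [hs i]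
    _ ≤ v x := sub_mul_le_of_eq_ciSup hb hv hx i

theorem conjugateOn_neg_le (hb : ∀ θ ∈ S, BddAbove (range fun i => c i - θ * s i))
    (hv : ∀ θ ∈ S, v θ = ⨆ i, (c i - θ * s i)) {θ : ℝ} (hθ : θ ∈ S) (i : ι) :
    conjugateOn S v (-s i) ≤ -c i := by
  have : Nonempty S := ⟨⟨θ, hθ⟩⟩
  refine ciSup_le fun θ' => ?_
  linarith [sub_mul_le_of_eq_ciSup hb hv θ'.2 i]

theorem eq_ciSup_nonpos_sub_conjugateOn [Nonempty ι] (hs : ∀ i, 0 ≤ s i)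
    (hb : ∀ θ ∈ S, BddAbove (range fun i => c i - θ * s i))
    (hv : ∀ θ ∈ S, v θ = ⨆ i, (c i - θ * s i))
    (hconj : ∀ y ≤ 0, BddAbove (range fun θ : S => θ.1 * y - v θ.1)) {θ : ℝ} (hθ : θ ∈ S) :
    v θ = ⨆ y : {y : ℝ // y ≤ 0}, (θ * y.1 - conjugateOn S v y.1) := by
  have hle : ∀ y : {y : ℝ // y ≤ 0}, θ * y.1 - conjugateOn S v y.1 ≤ v θ := fun y => by
    have := le_ciSup (hconj y.1 y.2) ⟨θ, hθ⟩
    rw [conjugateOn]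
    linarith
  have : Nonempty {y : ℝ // y ≤ 0} := ⟨⟨0, le_rfl⟩⟩
  refine le_antisymm ?_ (ciSup_le hle)
  rw [hv θ hθ]
  refine ciSup_le fun i => ?_
  calc c i - θ * s i ≤ θ * (-s i) - conjugateOn S v (-s i) := by
        linarith [conjugateOn_neg_le hb hv hθ i]
    _ ≤ ⨆ y : {y : ℝ // y ≤ 0}, (θ * y.1 - conjugateOn S v y.1) :=
        le_ciSup (f := fun y : {y : ℝ // y ≤ 0} => θ * y.1 - conjugateOn S v y.1)
          ⟨v θ, by rintro _ ⟨y, rfl⟩; exact hle y⟩ ⟨-s i, neg_nonpos.2 (hs i)⟩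

end SupOfAffine

theorem uConvex_eq_sup_nonpos_and_convex_antitone_general
    {Ω : Type*} [MeasureSpace Ω]
    (a : ℝ)
    (v : ℝ → ℝ)
    (π : {Y : Ω → ℝ // MemLp Y 2 ℙ} → ℝ)
    (hbdd : ∀ θ ∈ Set.Icc a 1,
      BddAbove (Set.range fun Y : {Y : Ω → ℝ // MemLp Y 2 ℙ} =>
        (∫ ω, Y.1 ω) - θ * variance Y.1 ℙ - π Y))
    (hUconv : ∀ θ ∈ Set.Icc a 1,
      v θ = ⨆ Y : {Y : Ω → ℝ // MemLp Y 2 ℙ},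
        ((∫ ω, Y.1 ω) - θ * variance Y.1 ℙ - π Y)) :
    (∀ θ ∈ Set.Icc a 1,
      v θ = ⨆ y : {y : ℝ // y ≤ 0},
        (θ * y.1 - ⨆ θ' : Set.Icc a 1, (θ'.1 * y.1 - v θ'.1)))
    ∧ ConvexOn ℝ (Set.Icc a 1) v ∧ AntitoneOn v (Set.Icc a 1) := by
  let zero : {Y : Ω → ℝ // MemLp Y 2 ℙ} := ⟨0, MemLp.zero⟩
  have : Nonempty {Y : Ω → ℝ // MemLp Y 2 ℙ} := ⟨zero⟩
  have hb : ∀ θ ∈ Icc a 1, BddAbove (range fun Y : {Y : Ω → ℝ // MemLp Y 2 ℙ} =>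
      ((∫ ω, Y.1 ω) - π Y) - θ * variance Y.1 ℙ) := by
    simpa only [sub_right_comm] using hbdd
  have hv : ∀ θ ∈ Icc a 1, v θ = ⨆ Y : {Y : Ω → ℝ // MemLp Y 2 ℙ},
      (((∫ ω, Y.1 ω) - π Y) - θ * variance Y.1 ℙ) := by
    simpa only [sub_right_comm] using hUconv
  have hs : ∀ Y : {Y : Ω → ℝ // MemLp Y 2 ℙ}, 0 ≤ variance Y.1 ℙ := fun Y => variance_nonneg _ _
  have hvbdd : BddBelow (v '' Icc a 1) := ⟨-π zero, by
    rintro _ ⟨θ, hθ, rfl⟩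
    simpa [zero, variance_zero] using sub_mul_le_of_eq_ciSup hb hv hθ zero⟩
  exact ⟨fun θ hθ => eq_ciSup_nonpos_sub_conjugateOn hs hb hv
      (fun _ hy => bddAbove_conjugateOn_of_nonpos bddBelow_Icc hvbdd hy) hθ,
    convexOn_of_eq_ciSup (convex_Icc a 1) hb hv, antitoneOn_of_eq_ciSup hs hb hv⟩

/-- If `v : [a,1] → ℝ` is a proper U-convex function w.r.t. the mean-variance
utility `U(θ,Y) = E[Y] − θ·Var[Y]` on a non-atomic probability space (so that
random variables of every variance exist), then
`v(θ) = sup_{y ≤ 0} {θ·y − v*(y)}`; in particular `v` is convex and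
non-increasing. -/
theorem uConvex_eq_sup_nonpos_and_convex_antitone
    {Ω : Type*} [MeasureSpace Ω] [IsProbabilityMeasure (ℙ : Measure Ω)]
    (a : ℝ) (ha : 0 < a) (ha1 : a ≤ 1)
    (hvarsurj : ∀ s : ℝ, 0 ≤ s → ∃ Y : Ω → ℝ, MemLp Y 2 ℙ ∧ variance Y ℙ = s)
    (v : ℝ → ℝ)
    (π : {Y : Ω → ℝ // MemLp Y 2 ℙ} → ℝ)
    (hbdd : ∀ θ ∈ Set.Icc a 1,
      BddAbove (Set.range fun Y : {Y : Ω → ℝ // MemLp Y 2 ℙ} =>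
        (∫ ω, Y.1 ω) - θ * variance Y.1 ℙ - π Y))
    (hUconv : ∀ θ ∈ Set.Icc a 1,
      v θ = ⨆ Y : {Y : Ω → ℝ // MemLp Y 2 ℙ},
        ((∫ ω, Y.1 ω) - θ * variance Y.1 ℙ - π Y)) :
    (∀ θ ∈ Set.Icc a 1,
      v θ = ⨆ y : {y : ℝ // y ≤ 0},
        (θ * y.1 - ⨆ θ' : Set.Icc a 1, (θ'.1 * y.1 - v θ'.1)))
    ∧ ConvexOn ℝ (Set.Icc a 1) v ∧ AntitoneOn v (Set.Icc a 1) :=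
  uConvex_eq_sup_nonpos_and_convex_antitone_general a v π hbdd hUconv
end

section
/- Let v: [a,1] → ℝ be proper and U-convex with respect to U(θ,Y) = E[Y] − θ·Var[Y]. Then the U-subdifferential satisfies ∂_U v(θ) = { Y ∈ L²(P) : −Var[Y] ∈ ∂v(θ) }, where ∂v is the ordinary convex subdifferential of v. -/
open MeasureTheory ProbabilityTheory Set

/- Fenchel–Young for the U-conjugate, `U(θ', Y) − v(θ') ≤ π(Y)`, makes `θ' ↦ U(θ', Y) − v(θ')`
bounded above on `[a, 1]`. Then `Y ∈ ∂_U v(θ)` says exactly that this function attains its supremum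
at `θ`, and since `U(θ', Y) − U(θ, Y) = −Var[Y] · (θ' − θ)`, being maximal at `θ` is the subgradient
inequality for `−Var[Y]`. -/

theorem apply_eq_ciSup_iff_forall_le {ι α : Type*} [ConditionallyCompleteLattice α] {f : ι → α}
    (hf : BddAbove (range f)) (i : ι) : f i = ⨆ j, f j ↔ ∀ j, f j ≤ f i := by
  have : Nonempty ι := ⟨i⟩
  exact ⟨fun h j => h ▸ le_ciSup hf j, fun h => le_antisymm (le_ciSup hf i) (ciSup_le h)⟩

theorem uSubdifferential_eq_neg_variance_subgradient_general
    {Ω : Type*} [MeasureSpace Ω]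
    (a : ℝ)
    (v : ℝ → ℝ)
    (π : {Y : Ω → ℝ // MemLp Y 2 ℙ} → ℝ)
    (hbdd : ∀ θ ∈ Set.Icc a 1,
      BddAbove (Set.range fun Y : {Y : Ω → ℝ // MemLp Y 2 ℙ} =>
        (∫ ω, Y.1 ω) - θ * variance Y.1 ℙ - π Y))
    (hUconv : ∀ θ ∈ Set.Icc a 1,
      v θ = ⨆ Y : {Y : Ω → ℝ // MemLp Y 2 ℙ},
        ((∫ ω, Y.1 ω) - θ * variance Y.1 ℙ - π Y))
    (θ : ℝ) (hθ : θ ∈ Set.Icc a 1) :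
    {Y : {Y : Ω → ℝ // MemLp Y 2 ℙ} |
        v θ = ((∫ ω, Y.1 ω) - θ * variance Y.1 ℙ)
          - ⨆ θ' : Set.Icc a 1, ((∫ ω, Y.1 ω) - θ'.1 * variance Y.1 ℙ - v θ'.1)}
      = {Y : {Y : Ω → ℝ // MemLp Y 2 ℙ} |
          ∀ θ' ∈ Set.Icc a 1, v θ + (-(variance Y.1 ℙ)) * (θ' - θ) ≤ v θ'} := by
  ext Y
  set φ : Set.Icc a 1 → ℝ := fun θ' => (∫ ω, Y.1 ω) - θ'.1 * variance Y.1 ℙ - v θ'.1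
  have fenchel_young : ∀ θ' : Set.Icc a 1, φ θ' ≤ π Y := fun θ' => by
    have := hUconv θ'.1 θ'.2 ▸ le_ciSup (hbdd θ'.1 θ'.2) Y
    simp only [φ]
    linarith
  have hφ : BddAbove (range φ) := ⟨π Y, forall_mem_range.2 fenchel_young⟩
  calc _ ↔ φ ⟨θ, hθ⟩ = ⨆ θ', φ θ' := by
        simp only [mem_ofPred_eq, φ]
        constructor <;> intro h <;> linarith
    _ ↔ ∀ θ', φ θ' ≤ φ ⟨θ, hθ⟩ := apply_eq_ciSup_iff_forall_le hφ _
    _ ↔ _ := by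
        simp only [mem_ofPred_eq, Subtype.forall, φ]
        refine forall₂_congr fun θ' _ => ?_
        constructor <;> intro h <;> linarith

/-- For a proper U-convex `v` (w.r.t. `U(θ,Y) = E[Y] − θ·Var[Y]`), the
U-subdifferential is `∂_U v(θ) = {Y ∈ L² : −Var[Y] ∈ ∂v(θ)}`, where `∂v` is
the ordinary convex subdifferential of `v` on `Θ = [a,1]`. -/
theorem uSubdifferential_eq_neg_variance_subgradient
    {Ω : Type*} [MeasureSpace Ω] [IsProbabilityMeasure (ℙ : Measure Ω)]
    (a : ℝ) (ha : 0 < a) (ha1 : a ≤ 1)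
    (hvarsurj : ∀ s : ℝ, 0 ≤ s → ∃ Y : Ω → ℝ, MemLp Y 2 ℙ ∧ variance Y ℙ = s)
    (v : ℝ → ℝ)
    (π : {Y : Ω → ℝ // MemLp Y 2 ℙ} → ℝ)
    (hbdd : ∀ θ ∈ Set.Icc a 1,
      BddAbove (Set.range fun Y : {Y : Ω → ℝ // MemLp Y 2 ℙ} =>
        (∫ ω, Y.1 ω) - θ * variance Y.1 ℙ - π Y))
    (hUconv : ∀ θ ∈ Set.Icc a 1,
      v θ = ⨆ Y : {Y : Ω → ℝ // MemLp Y 2 ℙ},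
        ((∫ ω, Y.1 ω) - θ * variance Y.1 ℙ - π Y))
    (θ : ℝ) (hθ : θ ∈ Set.Icc a 1) :
    {Y : {Y : Ω → ℝ // MemLp Y 2 ℙ} |
        v θ = ((∫ ω, Y.1 ω) - θ * variance Y.1 ℙ)
          - ⨆ θ' : Set.Icc a 1, ((∫ ω, Y.1 ω) - θ'.1 * variance Y.1 ℙ - v θ'.1)}
      = {Y : {Y : Ω → ℝ // MemLp Y 2 ℙ} |
          ∀ θ' ∈ Set.Icc a 1, v θ + (-(variance Y.1 ℙ)) * (θ' - θ) ≤ v θ'} :=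
  uSubdifferential_eq_neg_variance_subgradient_general a v π hbdd hUconv θ hθ
end
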